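/- Let g be the ℓ1 norm on ℝⁿ and z ∈ ℝⁿ with ‖z‖_∞ ≤ 1. Then the parallel subspace of ∂g*(z), i.e., span(∂g*(z) − x) for any x ∈ ∂g*(z), equals the set {x ∈ ℝⁿ : x_i = 0 whenever |z_i| < 1}. -/

import Mathlib

/-!
The conjugate of the `ℓ¹` norm is the indicator of the `ℓ^∞` unit ball `B`, so `∂g*(z)` is the
normal cone `N_B(z) = {v | v i * z i = |v i|}`. A normal cone is closed under addition, hence for
`x ∈ N_B(z)` the span of `N_B(z) - x` is the span of `N_B(z)` itself. Every normal vector vanishes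
at the coordinates where `|z i| < 1`, while for `|z i| = 1` the vector `z i • eᵢ` is normal; so this
span is the coordinate subspace of the coordinates where `|z i| = 1`.
-/

open scoped RealInnerProductSpace
noncomputable section

/-- Legendre–Fenchel conjugate of an extended-real-valued function. -/
def fenchel {X : Type*} [NormedAddCommGroup X] [InnerProductSpace ℝ X]
    (g : X → EReal) (v : X) : EReal :=
  ⨆ x : X, ((⟪v, x⟫ : ℝ) : EReal) - g x

/-- Convex subdifferential of an extended-real-valued function. -/
def esubdiff {X : Type*} [NormedAddCommGroup X] [InnerProductSpace ℝ X]
    (g : X → EReal) (x : X) : Set X :=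
  {v | ∀ y, g x + ((⟪v, y - x⟫ : ℝ) : EReal) ≤ g y}

open Classical in
/-- The indicator `δ_C` of convex analysis. -/
def erealIndicator {X : Type*} (C : Set X) (x : X) : EReal :=
  if x ∈ C then 0 else ⊤

section General

variable {X : Type*} [NormedAddCommGroup X] [InnerProductSpace ℝ X]

def normalCone (C : Set X) (z : X) : Set X :=
  {v | ∀ y ∈ C, ⟪v, y - z⟫ ≤ 0}

theorem esubdiff_erealIndicator {C : Set X} {z : X} (hz : z ∈ C) :
    esubdiff (erealIndicator C) z = normalCone C z := by
  ext v
  simp only [esubdiff, normalCone, erealIndicator, if_pos hz, zero_add, Set.mem_ofPred_eq]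
  refine forall_congr' fun y => ?_
  by_cases hy : y ∈ C <;> simp [hy]

theorem add_mem_normalCone {C : Set X} {z v w : X} (hv : v ∈ normalCone C z)
    (hw : w ∈ normalCone C z) : v + w ∈ normalCone C z := fun y hy => by
  rw [inner_add_left]
  linarith [hv y hy, hw y hy]

end General

theorem span_image_sub_eq_span {R M : Type*} [Ring R] [AddCommGroup M] [Module R M] {K : Set M}
    (hK : ∀ v ∈ K, ∀ w ∈ K, v + w ∈ K) {x : M} (hx : x ∈ K) :
    Submodule.span R ((· - x) '' K) = Submodule.span R K := by
  apply le_antisymm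
  · rw [Submodule.span_le]
    rintro _ ⟨v, hv, rfl⟩
    exact sub_mem (Submodule.subset_span hv) (Submodule.subset_span hx)
  · rw [Submodule.span_le]
    intro v hv
    exact Submodule.subset_span ⟨v + x, hK v hv x hx, add_sub_cancel_right v x⟩

theorem mul_le_abs_of_abs_le_one {a b : ℝ} (hb : |b| ≤ 1) : a * b ≤ |a| :=
  calc a * b ≤ |a| * |b| := abs_mul a b ▸ le_abs_self _
    _ ≤ |a| := mul_le_of_le_one_right (abs_nonneg a) hb

theorem eq_zero_of_mul_eq_abs_of_abs_lt_one {a b : ℝ} (h : a * b = |a|) (hb : |b| < 1) : a = 0 := by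
  have h' : |a| * |b| = |a| := by rw [← abs_mul, h, abs_abs]
  have : |a| * (1 - |b|) = 0 := by linarith
  simpa [sub_eq_zero, hb.ne'] using this

def linftyBall (ι : Type*) : Set (EuclideanSpace ℝ ι) :=
  {y | ∀ i, |y i| ≤ 1}

section Linfty

variable {ι : Type*}

theorem sign_mem_linftyBall (v : EuclideanSpace ℝ ι) :
    WithLp.toLp 2 (fun i => (SignType.sign (v i) : ℝ)) ∈ linftyBall ι := fun i => by
  rcases lt_trichotomy (v i) 0 with h | h | h <;> simp [h]

variable [Fintype ι]

theorem inner_eq_sum_mul (v y : EuclideanSpace ℝ ι) : ⟪v, y⟫ = ∑ i, v i * y i := by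
  simp [PiLp.inner_apply, mul_comm]

theorem inner_le_sum_abs {y : EuclideanSpace ℝ ι} (hy : y ∈ linftyBall ι)
    (v : EuclideanSpace ℝ ι) :
    ⟪v, y⟫ ≤ ∑ i, |v i| := by
  rw [inner_eq_sum_mul]
  exact Finset.sum_le_sum fun i _ => mul_le_abs_of_abs_le_one (hy i)

theorem fenchel_sum_abs_of_mem_linftyBall {v : EuclideanSpace ℝ ι} (hv : v ∈ linftyBall ι) :
    fenchel (fun x : EuclideanSpace ℝ ι => ((∑ i, |x i| : ℝ) : EReal)) v = 0 := by
  refine le_antisymm (iSup_le fun y => ?_) (le_iSup_of_le 0 (by simp))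
  rw [← EReal.coe_sub, EReal.coe_nonpos, sub_nonpos, real_inner_comm]
  exact inner_le_sum_abs hv y

theorem fenchel_sum_abs_of_notMem_linftyBall [DecidableEq ι] {v : EuclideanSpace ℝ ι}
    (hv : v ∉ linftyBall ι) :
    fenchel (fun x : EuclideanSpace ℝ ι => ((∑ i, |x i| : ℝ) : EReal)) v = ⊤ := by
  obtain ⟨i, hi⟩ : ∃ i, 1 < |v i| := by simpa [linftyBall] using hv
  set c := v i * v i - |v i|
  have hc : 0 < c := by nlinarith [abs_mul_abs_self (v i), abs_nonneg (v i)]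
  have objective (t : ℝ) (ht : 0 ≤ t) :
      ⟪v, EuclideanSpace.single i (t * v i)⟫ - ∑ j, |EuclideanSpace.single i (t * v i) j| =
        t * c := by
    simp only [EuclideanSpace.inner_single_right, PiLp.single_apply, apply_ite abs, abs_zero,
      Finset.sum_ite_eq', Finset.mem_univ, if_true, abs_mul, abs_of_nonneg ht, conj_trivial, c]
    ring
  rw [EReal.eq_top_iff_forall_lt]
  intro r
  obtain ⟨N, hN⟩ := exists_nat_gt (r / c)
  refine lt_of_lt_of_le ?_ (le_iSup _ (EuclideanSpace.single i ((N : ℝ) * v i)))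
  rw [← EReal.coe_sub, objective N N.cast_nonneg, EReal.coe_lt_coe_iff]
  exact (div_lt_iff₀ hc).1 hN

theorem fenchel_sum_abs :
    fenchel (fun x : EuclideanSpace ℝ ι => ((∑ i, |x i| : ℝ) : EReal)) =
      erealIndicator (linftyBall ι) := by
  classical
  funext v
  by_cases hv : v ∈ linftyBall ι
  · rw [fenchel_sum_abs_of_mem_linftyBall hv, erealIndicator, if_pos hv]
  · rw [fenchel_sum_abs_of_notMem_linftyBall hv, erealIndicator, if_neg hv]

theorem mem_normalCone_linftyBall_iff {z v : EuclideanSpace ℝ ι} (hz : z ∈ linftyBall ι) :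
    v ∈ normalCone (linftyBall ι) z ↔ ∀ i, v i * z i = |v i| := by
  have hle : ∀ i ∈ Finset.univ, v i * z i ≤ |v i| := fun i _ => mul_le_abs_of_abs_le_one (hz i)
  constructor
  · intro hv
    have h := hv _ (sign_mem_linftyBall v)
    simp only [inner_sub_right, inner_eq_sum_mul, self_mul_sign, sub_nonpos] at h
    exact fun i => (Finset.sum_eq_sum_iff_of_le hle).1 (le_antisymm (Finset.sum_le_sum hle) h) i
      (Finset.mem_univ i)
  · intro hv y hy
    rw [inner_sub_right, sub_nonpos, inner_eq_sum_mul v z, Finset.sum_congr rfl fun i _ => hv i]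
    exact inner_le_sum_abs hy v

theorem single_mem_normalCone_linftyBall [DecidableEq ι] {z : EuclideanSpace ℝ ι}
    (hz : z ∈ linftyBall ι) {i : ι} (hi : |z i| = 1) :
    EuclideanSpace.single i (z i) ∈ normalCone (linftyBall ι) z := by
  rw [mem_normalCone_linftyBall_iff hz]
  intro j
  by_cases hji : j = i
  · subst hji
    simp [← abs_mul_abs_self (z j), hi]
  · simp [hji]

theorem span_normalCone_linftyBall {z : EuclideanSpace ℝ ι} (hz : z ∈ linftyBall ι) :
    (Submodule.span ℝ (normalCone (linftyBall ι) z) : Set (EuclideanSpace ℝ ι)) =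
      {w | ∀ i, |z i| < 1 → w i = 0} := by
  classical
  ext w
  constructor
  · intro hw
    induction hw using Submodule.span_induction with
    | mem v hv => exact fun i hi =>
        eq_zero_of_mul_eq_abs_of_abs_lt_one ((mem_normalCone_linftyBall_iff hz).1 hv i) hi
    | zero => simp
    | add a b _ _ ha hb => intro i hi; simp [ha i hi, hb i hi]
    | smul c a _ ha => intro i hi; simp [ha i hi]
  · intro hw
    rw [SetLike.mem_coe, ← (EuclideanSpace.basisFun ι ℝ).sum_repr w]
    refine Submodule.sum_mem _ fun i _ => ?_
    rw [EuclideanSpace.basisFun_repr, EuclideanSpace.basisFun_apply]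
    by_cases hi : |z i| < 1
    · simp [hw i hi]
    have hzi : |z i| = 1 := le_antisymm (hz i) (not_lt.1 hi)
    have hzz : z i * z i = 1 := by rw [← abs_mul_abs_self, hzi, one_mul]
    have hsingle : EuclideanSpace.single i (1 : ℝ) = z i • EuclideanSpace.single i (z i) := by
      ext j
      by_cases hji : j = i
      · simp [hji, hzz]
      · simp [hji]
    rw [hsingle, smul_smul]
    exact Submodule.smul_mem _ _ (Submodule.subset_span (single_mem_normalCone_linftyBall hz hzi))

end Linfty

/-- for the ℓ1 norm `g` on ℝⁿ and `z` with `‖z‖_∞ ≤ 1`, the parallel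
subspace of `∂g*(z)`, i.e. `span (∂g*(z) - x)` for any `x ∈ ∂g*(z)`, equals
`{x : x i = 0 whenever |z i| < 1}`. -/
theorem stmt1 (n : ℕ) (z : EuclideanSpace ℝ (Fin n)) (hz : ∀ i, |z i| ≤ 1)
    (g : EuclideanSpace ℝ (Fin n) → EReal)
    (hg : g = fun x => ((∑ i, |x i| : ℝ) : EReal))
    (x : EuclideanSpace ℝ (Fin n)) (hx : x ∈ esubdiff (fenchel g) z) :
    (Submodule.span ℝ ((fun w => w - x) '' esubdiff (fenchel g) z) : Set (EuclideanSpace ℝ (Fin n)))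
      = {x : EuclideanSpace ℝ (Fin n) | ∀ i, |z i| < 1 → x i = 0} := by
  have hzB : z ∈ linftyBall (Fin n) := hz
  rw [hg, fenchel_sum_abs, esubdiff_erealIndicator hzB] at hx ⊢
  rw [span_image_sub_eq_span (fun v hv w hw => add_mem_normalCone hv hw) hx]
  exact span_normalCone_linftyBall hzB
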